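/- arXiv:1604.00959 — 2 statements merged into one kernel-verified Lean document; each statement's English description precedes it below -/
import Mathlib

section
/- A right congruence ρ on A^{-ω} is open if and only if there exists k ≥ 1 such that every word of A^k is a reset word for the Cayley graph Cay(ρ) and Cay(ρ) is a strongly connected, deterministic, complete A-graph with finitely many vertices. -/
/- Left infinite words over A are modelled as functions ℕ → A, where index 0 is
   the rightmost letter.  Appending a finite word on the right: -/

def lapp {A : Type*} (x : ℕ → A) (u : List A) : ℕ → A := fun n =>
  if h : n < u.length then u.reverse[n]'(by simpa using h) else x (n - u.length)

/-- u ∈ A* is a suffix of the left infinite word x -/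
def IsLSuffix {A : Type*} (u : List A) (x : ℕ → A) : Prop := ∃ y : ℕ → A, x = lapp y u

/-- right congruence on A^{-ω}: an equivalence relation compatible with the
  right action of A* (equivalently, with appending each letter) -/
def IsRightCongruence {A : Type*} (ρ : (ℕ → A) → (ℕ → A) → Prop) : Prop :=
  Equivalence ρ ∧ ∀ x y : ℕ → A, ∀ a : A, ρ x y → ρ (lapp x [a]) (lapp y [a])

section Graphs

variable {A Q : Type*}

/-- a left infinite path labelled x ending at q, in the A-graph with edge
  relation E (E p a q : there is an edge from p to q labelled a) -/
def HasLInfPath (E : Q → A → Q → Prop) (x : ℕ → A) (q : Q) : Prop :=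
  ∃ f : ℕ → Q, f 0 = q ∧ ∀ n : ℕ, E (f (n + 1)) (x n) (f n)

def OmegaDeterministic (E : Q → A → Q → Prop) : Prop :=
  ∀ x : ℕ → A, ∀ q q' : Q, HasLInfPath E x q → HasLInfPath E x q' → q = q'

def OmegaComplete (E : Q → A → Q → Prop) : Prop :=
  ∀ x : ℕ → A, ∃ q : Q, HasLInfPath E x q

def OmegaTrim (E : Q → A → Q → Prop) : Prop :=
  ∀ q : Q, ∃ x : ℕ → A, HasLInfPath E x q

/-- (-ω)-reset graph -/
def OmegaReset (E : Q → A → Q → Prop) : Prop :=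
  OmegaDeterministic E ∧ OmegaComplete E ∧ OmegaTrim E

/-- finite paths: HasPath E q u q' means u labels a path from q to q' -/
def HasPath (E : Q → A → Q → Prop) : Q → List A → Q → Prop
  | q, [], q' => q = q'
  | q, a :: u, q' => ∃ p : Q, E q a p ∧ HasPath E p u q'

end Graphs

/-- the setoid on A^{-ω} given by a right congruence -/
def caySetoid {A : Type*} {ρ : (ℕ → A) → (ℕ → A) → Prop} (hρ : IsRightCongruence ρ) :
    Setoid (ℕ → A) := ⟨ρ, hρ.1⟩

/-- the edge relation of the Cayley graph Cay(ρ): edges (uρ, a, (ua)ρ) -/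
def cayE {A : Type*} {ρ : (ℕ → A) → (ℕ → A) → Prop} (hρ : IsRightCongruence ρ) :
    Quotient (caySetoid hρ) → A → Quotient (caySetoid hρ) → Prop :=
  fun c a c' => ∃ u : ℕ → A, c = Quotient.mk (caySetoid hρ) u ∧
    c' = Quotient.mk (caySetoid hρ) (lapp u [a])

/-! A right congruence is open exactly when the class of a word depends only on its last `k`
letters for some `k`: cylinders form a basis of the compact space `A^{-ω}`. In `Cay(ρ)` the
path labelled `u` from the class of `x` ends at the class of `xu`, so this is the same as every
word of length `k` being a reset word; it also shows that every vertex is reached by a word of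
length `k` from any vertex, whence strong connectivity and finiteness. -/

section OpenRightCongruence

open PiNat Topology

variable {A : Type*}

lemma lapp_nil (x : ℕ → A) : lapp x [] = x := by
  funext n; simp [lapp]

lemma lapp_lapp (x : ℕ → A) (u v : List A) : lapp (lapp x u) v = lapp x (u ++ v) := by
  funext n
  simp only [lapp, List.length_append, List.reverse_append]
  by_cases hv : n < v.length
  · rw [dif_pos hv, dif_pos (by omega), List.getElem_append_left (by simpa using hv)]
  · rw [dif_neg hv]
    by_cases hu : n - v.length < u.length
    · rw [dif_pos hu, dif_pos (by omega), List.getElem_append_right (by simpa using hv)]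
      simp
    · rw [dif_neg hu, dif_neg (by omega), Nat.sub_sub, Nat.add_comm]

lemma lapp_mem_cylinder_lapp (x y : ℕ → A) (u : List A) :
    lapp y u ∈ cylinder (lapp x u) u.length := fun n hn => by
  simp [lapp, hn]

lemma reverse_res (x : ℕ → A) (k : ℕ) :
    (res x k).reverse = List.ofFn fun i : Fin k => x i := by
  induction k with
  | zero => rfl
  | succ k ih => rw [res_succ, List.reverse_cons, ih, List.ofFn_succ_last]; rfl

lemma lapp_drop_res (x : ℕ → A) (k : ℕ) : lapp (fun n => x (n + k)) (res x k) = x := by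
  funext n
  simp only [lapp, res_length, reverse_res]
  split_ifs with hn
  · exact List.getElem_ofFn ..
  · congr 1; omega

lemma lapp_res_mem_cylinder (x y : ℕ → A) (k : ℕ) : lapp y (res x k) ∈ cylinder x k := by
  have h := lapp_mem_cylinder_lapp (fun n => x (n + k)) y (res x k)
  rwa [lapp_drop_res, res_length] at h

/-- `cylinder x k` consists of the words having the same last `k` letters as `x`. -/
def SuffixDetermined (ρ : (ℕ → A) → (ℕ → A) → Prop) (k : ℕ) : Prop :=
  ∀ x y : ℕ → A, y ∈ cylinder x k → ρ x y

lemma SuffixDetermined.mono {ρ : (ℕ → A) → (ℕ → A) → Prop} {k m : ℕ}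
    (hk : SuffixDetermined ρ k) (hkm : k ≤ m) : SuffixDetermined ρ m :=
  fun x y hy => hk x y (cylinder_anti x hkm hy)

section Topology

variable [TopologicalSpace A] [DiscreteTopology A] {ρ : (ℕ → A) → (ℕ → A) → Prop}

lemma exists_cylinder_subset_of_mem_nhds {s : Set (ℕ → A)} {x : ℕ → A} (hs : s ∈ 𝓝 x) :
    ∃ n, cylinder x n ⊆ s := by
  obtain ⟨_, ⟨y, n, rfl⟩, hxy, hs⟩ :=
    (isTopologicalBasis_cylinders fun _ => A).mem_nhds_iff.1 hs
  exact ⟨n, mem_cylinder_iff_eq.1 hxy ▸ hs⟩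

lemma isOpen_of_suffixDetermined (hρ : Equivalence ρ) {k : ℕ} (hk : SuffixDetermined ρ k) :
    IsOpen {p : (ℕ → A) × (ℕ → A) | ρ p.1 p.2} := by
  refine isOpen_iff_mem_nhds.2 fun ⟨x, y⟩ hxy => ?_
  refine Filter.mem_of_superset (prod_mem_nhds
    ((isOpen_cylinder _ x k).mem_nhds (self_mem_cylinder x k))
    ((isOpen_cylinder _ y k).mem_nhds (self_mem_cylinder y k))) ?_
  rintro ⟨x', y'⟩ ⟨hx', hy'⟩
  exact hρ.trans (hρ.symm (hk x x' hx')) (hρ.trans hxy (hk y y' hy'))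

/-- Each class is open, so it contains a cylinder around each of its points; compactness of
`ℕ → A` makes the lengths of these cylinders uniformly bounded. -/
lemma exists_suffixDetermined_of_isOpen [Finite A] (hρ : Equivalence ρ)
    (h : IsOpen {p : (ℕ → A) × (ℕ → A) | ρ p.1 p.2}) : ∃ k, SuffixDetermined ρ k := by
  have hclass (x : ℕ → A) : ∃ n, cylinder x n ⊆ {y | ρ x y} :=
    exists_cylinder_subset_of_mem_nhds
      ((h.preimage (Continuous.prodMk_right x)).mem_nhds (hρ.refl x))
  choose N hN using hclass
  obtain ⟨t, -, ht⟩ := isCompact_univ.elim_nhds_subcover (fun x => cylinder x (N x))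
    fun x _ => (isOpen_cylinder _ x (N x)).mem_nhds (self_mem_cylinder x (N x))
  refine ⟨t.sup N, fun x y hy => ?_⟩
  obtain ⟨p, hp, hxp⟩ := Set.mem_iUnion₂.1 (ht (Set.mem_univ x))
  have hyp : y ∈ cylinder p (N p) :=
    mem_cylinder_iff_eq.1 hxp ▸ cylinder_anti x (Finset.le_sup hp) hy
  exact hρ.trans (hρ.symm (hN p hxp)) (hN p hyp)

end Topology

section Cayley

variable {ρ : (ℕ → A) → (ℕ → A) → Prop} (hρ : IsRightCongruence ρ)

lemma cayE_mk (x : ℕ → A) (a : A) :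
    cayE hρ (Quotient.mk _ x) a (Quotient.mk _ (lapp x [a])) :=
  ⟨x, rfl, rfl⟩

lemma exists_cayE (q : Quotient (caySetoid hρ)) (a : A) : ∃ r, cayE hρ q a r := by
  induction q using Quotient.inductionOn with | h x => exact ⟨_, cayE_mk hρ x a⟩

lemma cayE_functional {q r r' : Quotient (caySetoid hρ)} {a : A}
    (h : cayE hρ q a r) (h' : cayE hρ q a r') : r = r' := by
  obtain ⟨x, rfl, rfl⟩ := h
  obtain ⟨y, hxy, rfl⟩ := h'
  exact Quotient.sound (hρ.2 x y a (Quotient.exact hxy))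

lemma hasPath_mk_iff {x : ℕ → A} {u : List A} {r : Quotient (caySetoid hρ)} :
    HasPath (cayE hρ) (Quotient.mk _ x) u r ↔ r = Quotient.mk _ (lapp x u) := by
  induction u generalizing x with
  | nil => rw [lapp_nil]; exact eq_comm
  | cons a u ih =>
    rw [← List.singleton_append, ← lapp_lapp, ← ih]
    exact ⟨fun ⟨p, hp, hpath⟩ => cayE_functional hρ hp (cayE_mk hρ x a) ▸ hpath,
      fun hpath => ⟨_, cayE_mk hρ x a, hpath⟩⟩

namespace SuffixDetermined

variable {hρ} {k : ℕ}

lemma hasPath_eq (hk : SuffixDetermined ρ k) {u : List A} (hu : u.length = k)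
    {q q' r r' : Quotient (caySetoid hρ)} (hq : HasPath (cayE hρ) q u q')
    (hr : HasPath (cayE hρ) r u r') : q' = r' := by
  induction q using Quotient.inductionOn with | h x => ?_
  induction r using Quotient.inductionOn with | h y => ?_
  rw [(hasPath_mk_iff hρ).1 hq, (hasPath_mk_iff hρ).1 hr]
  exact Quotient.sound (hk _ _ (hu ▸ lapp_mem_cylinder_lapp _ _ u))

lemma exists_hasPath (hk : SuffixDetermined ρ k) (q r : Quotient (caySetoid hρ)) :
    ∃ u, HasPath (cayE hρ) q u r := by
  induction q using Quotient.inductionOn with | h x => ?_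
  induction r using Quotient.inductionOn with | h y => ?_
  exact ⟨res y k,
    (hasPath_mk_iff hρ).2 (Quotient.sound (hk _ _ (lapp_res_mem_cylinder y x k)))⟩

lemma finite_quotient [Finite A] (hk : SuffixDetermined ρ k) :
    Finite (Quotient (caySetoid hρ)) := by
  rcases isEmpty_or_nonempty (ℕ → A) with _ | ⟨⟨x₀⟩⟩
  · infer_instance
  refine Finite.of_surjective (fun u : List.Vector A k => Quotient.mk _ (lapp x₀ u.1)) ?_
  refine Quotient.ind fun x => ⟨⟨res x k, res_length x k⟩, ?_⟩
  exact (Quotient.sound (hk _ _ (lapp_res_mem_cylinder x x₀ k))).symm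

end SuffixDetermined

/-- Writing `x = lapp x' (res x k)`, the path labelled `res x k` from the class of `x'` ends at
the class of `x`; so words with the same last `k` letters are ends of paths with the same label. -/
lemma suffixDetermined_of_hasPath_eq {k : ℕ}
    (h : ∀ u : List A, u.length = k → ∀ q q' r r' : Quotient (caySetoid hρ),
      HasPath (cayE hρ) q u q' → HasPath (cayE hρ) r u r' → q' = r') :
    SuffixDetermined ρ k := by
  intro x y hy
  have hpath (z : ℕ → A) : HasPath (cayE hρ) (Quotient.mk _ fun n => z (n + k)) (res z k)
      (Quotient.mk _ z) :=
    (hasPath_mk_iff hρ).2 (by rw [lapp_drop_res])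
  have hres : res y k = res x k := res_eq_res.2 hy
  exact Quotient.exact (h _ (res_length x k) _ _ _ _ (hpath x) (hres ▸ hpath y))

end Cayley

end OpenRightCongruence

theorem open_iff_cayley_reset_general {A : Type*} [Fintype A]
    [TopologicalSpace A] [DiscreteTopology A]
    (ρ : (ℕ → A) → (ℕ → A) → Prop) (hρ : IsRightCongruence ρ) :
    IsOpen {p : (ℕ → A) × (ℕ → A) | ρ p.1 p.2} ↔
      ∃ k : ℕ, 1 ≤ k ∧
        (∀ u : List A, u.length = k →
          ∀ q q' r r' : Quotient (caySetoid hρ),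
            HasPath (cayE hρ) q u q' → HasPath (cayE hρ) r u r' → q' = r') ∧
        (∀ q r : Quotient (caySetoid hρ), ∃ u : List A, HasPath (cayE hρ) q u r) ∧
        (∀ q : Quotient (caySetoid hρ), ∀ a : A, ∀ r r', cayE hρ q a r → cayE hρ q a r' → r = r') ∧
        (∀ q : Quotient (caySetoid hρ), ∀ a : A, ∃ r, cayE hρ q a r) ∧
        Finite (Quotient (caySetoid hρ)) := by
  refine ⟨fun hopen => ?_, fun ⟨k, _, hreset, _⟩ =>
    isOpen_of_suffixDetermined hρ.1 (suffixDetermined_of_hasPath_eq hρ hreset)⟩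
  obtain ⟨k, hk⟩ := exists_suffixDetermined_of_isOpen hρ.1 hopen
  have hk' : SuffixDetermined ρ (k + 1) := hk.mono k.le_succ
  refine ⟨k + 1, k.succ_pos, fun u hu _ _ _ _ => hk'.hasPath_eq hu, hk'.exists_hasPath,
    fun _ _ _ _ => cayE_functional hρ, exists_cayE hρ, hk'.finite_quotient⟩

/-- a right congruence ρ on A^{-ω} is open iff for some k ≥ 1 every
  word of length k is a reset word for Cay(ρ), and Cay(ρ) is a strongly
  connected deterministic complete A-graph with finitely many vertices. -/
theorem open_iff_cayley_reset {A : Type*} [Fintype A] [Nonempty A]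
    [TopologicalSpace A] [DiscreteTopology A]
    (ρ : (ℕ → A) → (ℕ → A) → Prop) (hρ : IsRightCongruence ρ) :
    IsOpen {p : (ℕ → A) × (ℕ → A) | ρ p.1 p.2} ↔
      ∃ k : ℕ, 1 ≤ k ∧
        (∀ u : List A, u.length = k →
          ∀ q q' r r' : Quotient (caySetoid hρ),
            HasPath (cayE hρ) q u q' → HasPath (cayE hρ) r u r' → q' = r') ∧
        (∀ q r : Quotient (caySetoid hρ), ∃ u : List A, HasPath (cayE hρ) q u r) ∧
        (∀ q : Quotient (caySetoid hρ), ∀ a : A, ∀ r r', cayE hρ q a r → cayE hρ q a r' → r = r') ∧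
        (∀ q : Quotient (caySetoid hρ), ∀ a : A, ∃ r, cayE hρ q a r) ∧
        Finite (Quotient (caySetoid hρ)) :=
  open_iff_cayley_reset_general ρ hρ
end

section
/- Let A have at least two letters and L be a left ideal of A* (A*L ⊆ L). Then τ_L is a right congruence on A^{-ω} if and only if L is a two-sided ideal of A*, if and only if the set of suffix-minimal elements of L is a (right) semaphore code. -/
/-- the relation τ_P: x τ_P y iff x = y or some u ∈ P is a common suffix of x and y -/
def relTau {A : Type*} (P : Set (List A)) : (ℕ → A) → (ℕ → A) → Prop :=
  fun x y => x = y ∨ ∃ u ∈ P, IsLSuffix u x ∧ IsLSuffix u y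

/-- the suffix-minimal elements of L ⊆ A* (denoted Lβ_ℓ) -/
def minSuffix {A : Type*} (L : Set (List A)) : Set (List A) :=
  {u | u ∈ L ∧ ∀ v ∈ L, v <:+ u → v = u}

/-- suffix code: an antichain for the suffix order -/
def IsSuffixCode {A : Type*} (S : Set (List A)) : Prop :=
  ∀ u ∈ S, ∀ v ∈ S, u <:+ v → u = v

/-!
If `L` is closed under appending letters, a common suffix `u ∈ L` of `x` and `y` yields the
common suffix `u ++ [a] ∈ L` of `xa` and `ya`, so `τ_L` is a right congruence. Conversely, for
`u ∈ L` and letters `b ≠ c`, the words `b^ω u` and `c^ω u` are `τ_L`-related; after appending `a`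
they are still distinct and agree exactly on their suffixes of length at most `|ua|`, so some
suffix of `ua` lies in `L`, and hence `ua ∈ L` because `L` is a left ideal. For a left ideal, the
semaphore condition on `Lβ_ℓ` is one-letter right closure read on minimal suffixes, and `Lβ_ℓ` is
always a suffix code.
-/

section LeftInfiniteWord

variable {A : Type*}

theorem lapp_append (x : ℕ → A) (u v : List A) : lapp x (u ++ v) = lapp (lapp x u) v := by
  funext n
  simp only [lapp, List.reverse_append, List.length_append]
  by_cases hv : n < v.length
  · rw [dif_pos (by omega), dif_pos hv, List.getElem_append_left (by simpa using hv)]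
  by_cases huv : n < u.length + v.length
  · rw [dif_pos (by omega), dif_neg hv, dif_pos (by omega),
      List.getElem_append_right (by simpa using hv)]
    simp
  · rw [dif_neg (by omega), dif_neg hv, dif_neg (by omega)]
    congr 1
    omega

theorem lapp_length (x : ℕ → A) (u : List A) : lapp x u u.length = x 0 := by
  simp [lapp]

theorem isLSuffix_lapp (x : ℕ → A) (u : List A) : IsLSuffix u (lapp x u) := ⟨x, rfl⟩

theorem isLSuffix_iff_getElem {u : List A} {x : ℕ → A} :
    IsLSuffix u x ↔ ∀ n (h : n < u.length), x n = u.reverse[n]'(by simpa using h) := by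
  refine ⟨?_, fun h => ⟨fun n => x (n + u.length), funext fun n => ?_⟩⟩
  · rintro ⟨y, rfl⟩ n h
    simp [lapp, h]
  · unfold lapp
    split
    · exact h n ‹_›
    · congr 1
      omega

theorem IsLSuffix.append {u : List A} {x : ℕ → A} (hu : IsLSuffix u x) (v : List A) :
    IsLSuffix (u ++ v) (lapp x v) := by
  obtain ⟨y, rfl⟩ := hu
  rw [← lapp_append]
  exact isLSuffix_lapp _ _

theorem IsLSuffix.of_suffix {u v : List A} {x : ℕ → A} (hv : IsLSuffix v x) (huv : u <:+ v) :
    IsLSuffix u x := by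
  obtain ⟨t, rfl⟩ := huv
  obtain ⟨y, rfl⟩ := hv
  rw [lapp_append]
  exact isLSuffix_lapp _ _

theorem IsLSuffix.suffix_of_length_le {u v : List A} {x : ℕ → A} (hu : IsLSuffix u x)
    (hv : IsLSuffix v x) (hlen : u.length ≤ v.length) : u <:+ v := by
  rw [← List.reverse_prefix, List.prefix_iff_eq_take]
  apply List.ext_getElem (by simp; omega)
  intro n hn _
  rw [List.getElem_take, ← isLSuffix_iff_getElem.mp hu n (by simpa using hn),
    isLSuffix_iff_getElem.mp hv n (by simp at hn; omega)]

theorem IsLSuffix.suffix_of_lapp_of_ne {w v : List A} {x y : ℕ → A}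
    (hx : IsLSuffix w (lapp x v)) (hy : IsLSuffix w (lapp y v)) (hxy : x 0 ≠ y 0) : w <:+ v := by
  refine hx.suffix_of_length_le (isLSuffix_lapp x v) (not_lt.mp fun hlt => hxy ?_)
  rw [← lapp_length x v, ← lapp_length y v, isLSuffix_iff_getElem.mp hx _ hlt,
    isLSuffix_iff_getElem.mp hy _ hlt]

end LeftInfiniteWord

section Tau

variable {A : Type*}

theorem relTau_equivalence (P : Set (List A)) : Equivalence (relTau P) where
  refl _ := Or.inl rfl
  symm := by
    rintro x y (rfl | ⟨u, hu, hx, hy⟩)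
    exacts [Or.inl rfl, Or.inr ⟨u, hu, hy, hx⟩]
  trans := by
    rintro x y z (rfl | ⟨u, hu, hx, hy⟩) (rfl | ⟨v, hv, hy', hz⟩)
    · exact Or.inl rfl
    · exact Or.inr ⟨v, hv, hy', hz⟩
    · exact Or.inr ⟨u, hu, hx, hy⟩
    rcases le_total u.length v.length with hle | hle
    · exact Or.inr ⟨u, hu, hx, hz.of_suffix (hy.suffix_of_length_le hy' hle)⟩
    · exact Or.inr ⟨v, hv, hx.of_suffix (hy'.suffix_of_length_le hy hle), hz⟩

theorem forall_append_mem_of_forall_append_singleton_mem {L : Set (List A)}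
    (h : ∀ u ∈ L, ∀ a : A, u ++ [a] ∈ L) : ∀ u ∈ L, ∀ v : List A, u ++ v ∈ L := by
  intro u hu v
  induction v generalizing u with
  | nil => simpa using hu
  | cons a v ih => simpa using ih (u ++ [a]) (h u hu a)

theorem isRightCongruence_relTau_of_append_mem {L : Set (List A)}
    (hR : ∀ u ∈ L, ∀ v : List A, u ++ v ∈ L) : IsRightCongruence (relTau L) := by
  refine ⟨relTau_equivalence L, ?_⟩
  rintro x y a (rfl | ⟨u, hu, hx, hy⟩)
  · exact Or.inl rfl
  · exact Or.inr ⟨u ++ [a], hR u hu [a], hx.append [a], hy.append [a]⟩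

theorem exists_suffix_mem_of_relTau_lapp {L : Set (List A)} {x y : ℕ → A} {v : List A}
    (hxy : x 0 ≠ y 0) (h : relTau L (lapp x v) (lapp y v)) : ∃ w ∈ L, w <:+ v := by
  rcases h with heq | ⟨w, hw, hx, hy⟩
  · exact absurd (by rw [← lapp_length x v, heq, lapp_length]) hxy
  · exact ⟨w, hw, hx.suffix_of_lapp_of_ne hy hxy⟩

theorem append_mem_of_isRightCongruence_relTau {L : Set (List A)} (h2 : ∃ b c : A, b ≠ c)
    (hL : ∀ u ∈ L, ∀ v : List A, v ++ u ∈ L) (hτ : IsRightCongruence (relTau L)) :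
    ∀ u ∈ L, ∀ v : List A, u ++ v ∈ L := by
  obtain ⟨b, c, hbc⟩ := h2
  refine forall_append_mem_of_forall_append_singleton_mem fun u hu a => ?_
  have hrel : relTau L (lapp (fun _ => b) u) (lapp (fun _ => c) u) :=
    Or.inr ⟨u, hu, isLSuffix_lapp _ _, isLSuffix_lapp _ _⟩
  have hrel_a := hτ.2 _ _ a hrel
  rw [← lapp_append, ← lapp_append] at hrel_a
  obtain ⟨w, hw, t, ht⟩ := exists_suffix_mem_of_relTau_lapp hbc hrel_a
  rw [← ht]
  exact hL w hw t

end Tau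

section MinSuffix

variable {A : Type*}

theorem exists_mem_minSuffix_suffix {L : Set (List A)} {u : List A} (hu : u ∈ L) :
    ∃ s ∈ minSuffix L, s <:+ u := by
  obtain ⟨s, ⟨hsL, hsu⟩, hmin⟩ :=
    (measure List.length).wf.has_min {v | v ∈ L ∧ v <:+ u} ⟨u, hu, List.suffix_rfl⟩
  refine ⟨s, ⟨hsL, fun v hvL hvs => hvs.eq_of_length ?_⟩, hsu⟩
  exact le_antisymm hvs.length_le (not_lt.mp (hmin v ⟨hvL, hvs.trans hsu⟩))

theorem isSuffixCode_minSuffix (L : Set (List A)) : IsSuffixCode (minSuffix L) :=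
  fun u hu _ hv huv => hv.2 u hu.1 huv

theorem forall_append_mem_iff_minSuffix {L : Set (List A)}
    (hL : ∀ u ∈ L, ∀ v : List A, v ++ u ∈ L) :
    (∀ u ∈ L, ∀ v : List A, u ++ v ∈ L) ↔
      ∀ u ∈ minSuffix L, ∀ a : A, ∃ w : List A, ∃ s ∈ minSuffix L, u ++ [a] = w ++ s := by
  refine ⟨fun hR u hu a => ?_, fun hS => ?_⟩
  · obtain ⟨s, hs, w, hws⟩ := exists_mem_minSuffix_suffix (hR u hu.1 [a])
    exact ⟨w, s, hs, hws.symm⟩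
  · refine forall_append_mem_of_forall_append_singleton_mem fun u hu a => ?_
    obtain ⟨s, hs, w, rfl⟩ := exists_mem_minSuffix_suffix hu
    obtain ⟨w', s', hs', hsa⟩ := hS s hs a
    rw [List.append_assoc, hsa, ← List.append_assoc]
    exact hL s' hs'.1 _

end MinSuffix

theorem relTau_rightCongruence_iff_general {A : Type*} (h2 : ∃ a b : A, a ≠ b)
    (L : Set (List A)) (hL : ∀ u ∈ L, ∀ v : List A, v ++ u ∈ L) :
    (IsRightCongruence (relTau L) ↔ ∀ u ∈ L, ∀ v : List A, u ++ v ∈ L) ∧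
    (IsRightCongruence (relTau L) ↔
      (IsSuffixCode (minSuffix L) ∧
        ∀ u ∈ minSuffix L, ∀ a : A, ∃ w : List A, ∃ s ∈ minSuffix L, u ++ [a] = w ++ s)) := by
  have hideal : IsRightCongruence (relTau L) ↔ ∀ u ∈ L, ∀ v : List A, u ++ v ∈ L :=
    ⟨append_mem_of_isRightCongruence_relTau h2 hL, isRightCongruence_relTau_of_append_mem⟩
  refine ⟨hideal, hideal.trans ?_⟩
  rw [forall_append_mem_iff_minSuffix hL]
  exact (and_iff_right (isSuffixCode_minSuffix L)).symm

/-- for a left ideal L of A* (|A| ≥ 2): τ_L is a right congruence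
  on A^{-ω} iff L is a two-sided ideal, iff the suffix-minimal elements of L form
  a (right) semaphore code. -/
theorem relTau_rightCongruence_iff {A : Type*} [Fintype A] (h2 : ∃ a b : A, a ≠ b)
    (L : Set (List A)) (hL : ∀ u ∈ L, ∀ v : List A, v ++ u ∈ L) :
    (IsRightCongruence (relTau L) ↔ ∀ u ∈ L, ∀ v : List A, u ++ v ∈ L) ∧
    (IsRightCongruence (relTau L) ↔
      (IsSuffixCode (minSuffix L) ∧
        ∀ u ∈ minSuffix L, ∀ a : A, ∃ w : List A, ∃ s ∈ minSuffix L, u ++ [a] = w ++ s)) :=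
  relTau_rightCongruence_iff_general h2 L hL
end
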